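/- arXiv:2301.06659 — 2 statements merged into one kernel-verified Lean document; each statement's English description precedes it below -/
import Mathlib

section
/- Let T > 0 and let y, y', z, z' : [0,T] × ℝ³ → ℂ be measurable. Then ‖z·conj(y) − z'·conj(y')‖_{L^{4/3}(0,T;L^{3/2}(ℝ³))} ≤ T^{1/4} · (‖y‖_{L²(0,T;L⁶(ℝ³))} + ‖z'‖_{L²(0,T;L⁶(ℝ³))}) · (ess sup_{t∈[0,T]} ‖y(t)−y'(t)‖_{L²(ℝ³)} + ess sup_{t∈[0,T]} ‖z(t)−z'(t)‖_{L²(ℝ³)}), as an inequality of extended nonnegative reals. (Lipschitz estimate for the quadratic nonlinearity used in the contraction argument in dimension d = 3.) -/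
open MeasureTheory Filter
open scoped ENNReal ComplexConjugate

/-!
Write `z ȳ − z' ȳ' = (z − z') ȳ + z' (y − y')‾`. At each time, Hölder in space with
`2/3 = 1/2 + 1/6` bounds the `L^{3/2}` norm of this by `(‖y(t)‖₆ + ‖z'(t)‖₆) (Ey + Ez)` for almost
every `t`, where `Ey`, `Ez` are the two essential suprema. In time, Hölder on `[0, T]` passes from
`L^{4/3}` to `L²` at the cost of `T^{3/4 - 1/2}`, and Minkowski splits the `L²` norm of the sum.
-/

theorem Measurable.eLpNorm_section {β α E : Type*} [MeasurableSpace β] [MeasurableSpace α]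
    {ν : Measure α} [SFinite ν] [NormedAddCommGroup E] [MeasurableSpace E] [OpensMeasurableSpace E]
    {f : β → α → E} (hf : Measurable (Function.uncurry f)) {p : ℝ≥0∞} (hp0 : p ≠ 0) (hp : p ≠ ∞) :
    Measurable fun t => eLpNorm (f t) p ν := by
  simp_rw [eLpNorm_eq_lintegral_rpow_enorm_toReal hp0 hp]
  exact (hf.enorm.pow_const _).lintegral_prod_right'.pow_const _

section Space

variable {α 𝕜 : Type*} [MeasurableSpace α] {μ : Measure α} [RCLike 𝕜] {p q r : ℝ≥0∞}

theorem eLpNorm_mul_conj_le [p.HolderTriple q r] {f g : α → 𝕜}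
    (hf : AEStronglyMeasurable f μ) (hg : AEStronglyMeasurable g μ) :
    eLpNorm (fun x => f x * conj (g x)) r μ ≤ eLpNorm f p μ * eLpNorm g q μ := by
  simpa using eLpNorm_le_eLpNorm_mul_eLpNorm_of_nnnorm hf hg (fun a b => a * conj b) 1
    (.of_forall fun x => by simp)

theorem eLpNorm_mul_conj_sub_mul_conj_le [p.HolderTriple q r] (hr : 1 ≤ r) {f f' g g' : α → 𝕜}
    (hf : AEStronglyMeasurable f μ) (hf' : AEStronglyMeasurable f' μ)
    (hg : AEStronglyMeasurable g μ) (hg' : AEStronglyMeasurable g' μ) :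
    eLpNorm (fun x => f x * conj (g x) - f' x * conj (g' x)) r μ
      ≤ eLpNorm (f - f') p μ * eLpNorm g q μ + eLpNorm f' q μ * eLpNorm (g - g') p μ := by
  have hsplit : (fun x => f x * conj (g x) - f' x * conj (g' x))
      = (fun x => (f - f') x * conj (g x)) + fun x => f' x * conj ((g - g') x) := by
    ext x
    simp only [Pi.add_apply, Pi.sub_apply, map_sub]
    ring
  rw [hsplit]
  refine (eLpNorm_add_le ?_ ?_ hr).trans (add_le_add ?_ ?_)
  · exact (hf.sub hf').mul hg.star
  · exact hf'.mul (hg.sub hg').star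
  · exact eLpNorm_mul_conj_le (hf.sub hf') hg
  · exact eLpNorm_mul_conj_le hf' (hg.sub hg')

end Space

section Time

variable {β : Type*} [MeasurableSpace β] {μ : Measure β}

theorem eLpNorm'_mul_const_ennreal {G : β → ℝ≥0∞} (hG : AEMeasurable G μ) (M : ℝ≥0∞) {p : ℝ}
    (hp : 0 < p) : eLpNorm' (fun t => G t * M) p μ = eLpNorm' G p μ * M := by
  simp only [eLpNorm'_eq_lintegral_enorm, enorm_eq_self]
  simp_rw [ENNReal.mul_rpow_of_nonneg _ _ hp.le]
  rw [lintegral_mul_const'' _ (hG.pow_const p), ENNReal.mul_rpow_of_nonneg _ _ (by positivity),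
    ← ENNReal.rpow_mul, mul_one_div_cancel hp.ne', ENNReal.rpow_one]

theorem eLpNorm'_le_rpow_measure_univ_mul_of_ae_le {p q : ℝ} (hp : 0 < p) (hpq : p ≤ q)
    (hq : 1 ≤ q) {F A B : β → ℝ≥0∞} (hA : AEMeasurable A μ) (hB : AEMeasurable B μ) {M : ℝ≥0∞}
    (hF : ∀ᵐ t ∂μ, F t ≤ (A t + B t) * M) :
    eLpNorm' F p μ ≤ μ Set.univ ^ (1 / p - 1 / q) * (eLpNorm' A q μ + eLpNorm' B q μ) * M :=
  calc eLpNorm' F p μ ≤ eLpNorm' (fun t => (A + B) t * M) p μ :=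
        eLpNorm'_mono_enorm_ae hp.le (by simpa using hF)
    _ = eLpNorm' (A + B) p μ * M := eLpNorm'_mul_const_ennreal (hA.add hB) M hp
    _ ≤ eLpNorm' (A + B) q μ * μ Set.univ ^ (1 / p - 1 / q) * M := by
        gcongr
        exact eLpNorm'_le_eLpNorm'_mul_rpow_measure_univ hp hpq (hA.add hB).aestronglyMeasurable
    _ ≤ (eLpNorm' A q μ + eLpNorm' B q μ) * μ Set.univ ^ (1 / p - 1 / q) * M := by
        gcongr
        exact eLpNorm'_add_le hA.aestronglyMeasurable hB.aestronglyMeasurable hq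
    _ = μ Set.univ ^ (1 / p - 1 / q) * (eLpNorm' A q μ + eLpNorm' B q μ) * M := by ring

end Time

theorem ENNReal.holderTriple_two_six : ENNReal.HolderTriple 2 6 (3 / 2) := by
  rw [ENNReal.holderTriple_iff, ENNReal.inv_div (by simp) (by simp)]
  refine (ENNReal.toReal_eq_toReal_iff' (by finiteness) (by finiteness)).1 ?_
  norm_num [ENNReal.toReal_add, ENNReal.toReal_div]
theorem lipschitz_estimate_d3_general (T : ℝ) (y y' z z' : ℝ → (Fin 3 → ℝ) → ℂ)
    (hy : Measurable (Function.uncurry y)) (hy' : Measurable (Function.uncurry y'))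
    (hz : Measurable (Function.uncurry z)) (hz' : Measurable (Function.uncurry z')) :
    (∫⁻ t in Set.Icc (0 : ℝ) T,
        eLpNorm (fun ξ => z t ξ * (starRingEnd ℂ) (y t ξ)
            - z' t ξ * (starRingEnd ℂ) (y' t ξ)) (3 / 2 : ℝ≥0∞)
          (volume : Measure (Fin 3 → ℝ)) ^ ((4 : ℝ) / 3)) ^ ((3 : ℝ) / 4)
      ≤ ENNReal.ofReal T ^ ((1 : ℝ) / 4)
          * ((∫⁻ t in Set.Icc (0 : ℝ) T,
                eLpNorm (y t) 6 (volume : Measure (Fin 3 → ℝ)) ^ ((2 : ℝ))) ^ ((1 : ℝ) / 2)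
              + (∫⁻ t in Set.Icc (0 : ℝ) T,
                  eLpNorm (z' t) 6 (volume : Measure (Fin 3 → ℝ)) ^ ((2 : ℝ))) ^ ((1 : ℝ) / 2))
          * (essSup (fun t => eLpNorm (fun ξ => y t ξ - y' t ξ) 2
                (volume : Measure (Fin 3 → ℝ)))
                ((volume : Measure ℝ).restrict (Set.Icc (0 : ℝ) T))
              + essSup (fun t => eLpNorm (fun ξ => z t ξ - z' t ξ) 2
                  (volume : Measure (Fin 3 → ℝ)))
                  ((volume : Measure ℝ).restrict (Set.Icc (0 : ℝ) T))) := by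
  set μT := (volume : Measure ℝ).restrict (Set.Icc (0 : ℝ) T)
  set Ey := essSup (fun t => eLpNorm (fun ξ => y t ξ - y' t ξ) 2 volume) μT
  set Ez := essSup (fun t => eLpNorm (fun ξ => z t ξ - z' t ξ) 2 volume) μT
  have : ENNReal.HolderTriple 2 6 (3 / 2) := ENNReal.holderTriple_two_six
  have hbound : ∀ᵐ t ∂μT,
      eLpNorm (fun ξ => z t ξ * conj (y t ξ) - z' t ξ * conj (y' t ξ)) (3 / 2) volume
        ≤ (eLpNorm (y t) 6 volume + eLpNorm (z' t) 6 volume) * (Ey + Ez) := by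
    filter_upwards
      [ENNReal.ae_le_essSup (μ := μT) fun t => eLpNorm (fun ξ => y t ξ - y' t ξ) 2 volume,
        ENNReal.ae_le_essSup (μ := μT) fun t => eLpNorm (fun ξ => z t ξ - z' t ξ) 2 volume]
      with t hyt hzt
    calc _ ≤ eLpNorm (z t - z' t) 2 volume * eLpNorm (y t) 6 volume
            + eLpNorm (z' t) 6 volume * eLpNorm (y t - y' t) 2 volume :=
          eLpNorm_mul_conj_sub_mul_conj_le (by rw [ENNReal.le_div_iff_mul_le] <;> norm_num)
            hz.of_uncurry_left.aestronglyMeasurable hz'.of_uncurry_left.aestronglyMeasurable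
            hy.of_uncurry_left.aestronglyMeasurable hy'.of_uncurry_left.aestronglyMeasurable
      _ ≤ Ez * eLpNorm (y t) 6 volume + eLpNorm (z' t) 6 volume * Ey := by gcongr <;> assumption
      _ ≤ (eLpNorm (y t) 6 volume + eLpNorm (z' t) 6 volume) * (Ey + Ez) := by
          rw [mul_comm Ez, add_mul]
          gcongr
          exacts [le_add_self, le_self_add]
  have key := eLpNorm'_le_rpow_measure_univ_mul_of_ae_le (p := 4 / 3) (q := 2) (by norm_num)
    (by norm_num) (by norm_num) (hy.eLpNorm_section (by norm_num) (by norm_num)).aemeasurable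
    (hz'.eLpNorm_section (by norm_num) (by norm_num)).aemeasurable hbound
  simp only [eLpNorm'_eq_lintegral_enorm, enorm_eq_self] at key
  convert key using 2 <;> norm_num [μT, Real.volume_Icc]

/-- Lipschitz estimate for the quadratic nonlinearity, used in the contraction argument in
dimension `d = 3`:
`‖z conj(y) − z' conj(y')‖_{L^{4/3}(0,T;L^{3/2})} ≤ T^{1/4} (‖y‖_{L²(0,T;L⁶)} + ‖z'‖_{L²(0,T;L⁶)})
  · (ess sup ‖y−y'‖_{L²} + ess sup ‖z−z'‖_{L²})`. -/
theorem lipschitz_estimate_d3 (T : ℝ) (hT : 0 < T) (y y' z z' : ℝ → (Fin 3 → ℝ) → ℂ)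
    (hy : Measurable (Function.uncurry y)) (hy' : Measurable (Function.uncurry y'))
    (hz : Measurable (Function.uncurry z)) (hz' : Measurable (Function.uncurry z')) :
    (∫⁻ t in Set.Icc (0 : ℝ) T,
        eLpNorm (fun ξ => z t ξ * (starRingEnd ℂ) (y t ξ)
            - z' t ξ * (starRingEnd ℂ) (y' t ξ)) (3 / 2 : ℝ≥0∞)
          (volume : Measure (Fin 3 → ℝ)) ^ ((4 : ℝ) / 3)) ^ ((3 : ℝ) / 4)
      ≤ ENNReal.ofReal T ^ ((1 : ℝ) / 4)
          * ((∫⁻ t in Set.Icc (0 : ℝ) T,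
                eLpNorm (y t) 6 (volume : Measure (Fin 3 → ℝ)) ^ ((2 : ℝ))) ^ ((1 : ℝ) / 2)
              + (∫⁻ t in Set.Icc (0 : ℝ) T,
                  eLpNorm (z' t) 6 (volume : Measure (Fin 3 → ℝ)) ^ ((2 : ℝ))) ^ ((1 : ℝ) / 2))
          * (essSup (fun t => eLpNorm (fun ξ => y t ξ - y' t ξ) 2
                (volume : Measure (Fin 3 → ℝ)))
                ((volume : Measure ℝ).restrict (Set.Icc (0 : ℝ) T))
              + essSup (fun t => eLpNorm (fun ξ => z t ξ - z' t ξ) 2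
                  (volume : Measure (Fin 3 → ℝ)))
                  ((volume : Measure ℝ).restrict (Set.Icc (0 : ℝ) T))) :=
  lipschitz_estimate_d3_general T y y' z z' hy hy' hz hz'
end

section
/- Let T > 0 and let y, z : [0,T] × ℝ → ℂ be measurable, such that for almost every t ∈ [0,T] the functions y(t,·) and z(t,·) are differentiable on ℝ. Then ∫₀ᵀ ‖z(t)·conj(y(t))‖_{W^{1,2}(ℝ)} dt ≤ 2 · T^{3/4} · (∫₀ᵀ ‖z(t)‖_{W^{1,∞}(ℝ)}⁴ dt)^{1/4} · ess sup_{t∈[0,T]} ‖y(t)‖_{W^{1,2}(ℝ)}, as an inequality of extended nonnegative reals. (H¹-level bilinear estimate used for the quadratic nonlinearity in dimension d = 1.) -/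
/-!
By the Leibniz rule and Hölder's inequality in space, for a.e. `t`
`‖z(t) conj y(t)‖_{W^{1,2}} ≤ ‖z(t)‖_{W^{1,∞}} ‖y(t)‖_{W^{1,2}}` (so the constant `2` is slack).
Bounding the second factor by its essential supremum in time and applying Hölder's inequality
with exponents `4` and `4/3` on `[0,T]` gives the estimate. In the degenerate case where that
essential supremum is infinite and `∫₀ᵀ ‖z(t)‖_{W^{1,∞}}⁴ dt = 0`, the right side is `0`; then
`t ↦ ‖z(t)‖_{L^∞}`, measurable because `z` is jointly measurable, vanishes for a.e. `t`, and a
continuous function vanishing a.e. vanishes identically.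
-/

open MeasureTheory Filter
open scoped ENNReal

/-- Sobolev `W^{1,p}` norm of a function `f : ℝ → ℂ`:
`‖f‖_{W^{1,p}} = ‖f‖_{L^p} + ‖∇f‖_{L^p}`, valued in `[0,∞]`. -/
noncomputable def W1NormR (p : ℝ≥0∞) (f : ℝ → ℂ) : ℝ≥0∞ :=
  eLpNorm f p (volume : Measure ℝ) + eLpNorm (fderiv ℝ f) p (volume : Measure ℝ)

open Set Function

section MeasureTheory

variable {α β : Type*} [MeasurableSpace α] [MeasurableSpace β]

theorem measurable_essSup_of_measurable_uncurry {ν : Measure β} [SFinite ν] {G : α → β → ℝ≥0∞}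
    (hG : Measurable (uncurry G)) : Measurable fun a => essSup (G a) ν := by
  refine measurable_of_Iic fun c => ?_
  have hpre : (fun a => essSup (G a) ν) ⁻¹' Iic c
      = (fun a => ν (Prod.mk a ⁻¹' {p | c < uncurry G p})) ⁻¹' {0} := by
    ext a
    have hle : essSup (G a) ν ≤ c ↔ ∀ᵐ b ∂ν, G a b ≤ c :=
      ⟨fun h => (ENNReal.ae_le_essSup (G a)).mono fun _ hb => hb.trans h, essSup_le_of_ae_le c⟩
    simpa [ae_iff] using hle
  rw [hpre]
  exact measurable_measure_prodMk_left (measurableSet_lt measurable_const hG)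
    (measurableSet_singleton 0)

theorem measurable_eLpNorm_top_of_measurable_uncurry {E : Type*} [NormedAddCommGroup E]
    [MeasurableSpace E] [OpensMeasurableSpace E] {ν : Measure β} [SFinite ν] {f : α → β → E}
    (hf : Measurable (uncurry f)) : Measurable fun a => eLpNorm (f a) ∞ ν := by
  simp_rw [eLpNorm_exponent_top, eLpNormEssSup]
  exact measurable_essSup_of_measurable_uncurry hf.enorm

theorem ae_ae_eq_zero_of_lintegral_eLpNorm_top_rpow_eq_zero {E : Type*} [NormedAddCommGroup E]
    [MeasurableSpace E] [OpensMeasurableSpace E] {μ : Measure α} {ν : Measure β} [SFinite ν]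
    {f : α → β → E} (hf : Measurable (uncurry f)) {p : ℝ} (hp : 0 < p)
    (h : ∫⁻ a, eLpNorm (f a) ∞ ν ^ p ∂μ = 0) : ∀ᵐ a ∂μ, f a =ᵐ[ν] 0 := by
  have hm := (measurable_eLpNorm_top_of_measurable_uncurry (ν := ν) hf).pow_const p
  filter_upwards [(lintegral_eq_zero_iff hm).1 h] with a ha
  rw [← eLpNormEssSup_eq_zero_iff, ← eLpNorm_exponent_top]
  simpa [ENNReal.rpow_eq_zero_iff, hp, not_lt.2 hp.le] using ha

theorem lintegral_mul_le_lintegral_mul_essSup {μ : Measure α} (f g : α → ℝ≥0∞)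
    (hg : essSup g μ ≠ ∞) :
    ∫⁻ a, f a * g a ∂μ ≤ (∫⁻ a, f a ∂μ) * essSup g μ := by
  rw [← lintegral_mul_const' _ _ hg]
  exact lintegral_mono_ae <| (ENNReal.ae_le_essSup g).mono fun a ha => by gcongr

theorem lintegral_le_lintegral_rpow_mul_measure_univ (μ : Measure α) {p : ℝ} (hp : 1 < p)
    (f : α → ℝ≥0∞) :
    ∫⁻ a, f a ∂μ ≤ (∫⁻ a, f a ^ p ∂μ) ^ (1 / p) * μ univ ^ (1 - 1 / p) := by
  obtain ⟨g, hgm, hgf, hg⟩ := exists_measurable_le_lintegral_eq μ f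
  have hpq := Real.HolderConjugate.conjExponent hp
  calc ∫⁻ a, f a ∂μ = ∫⁻ a, (g * 1) a ∂μ := by simp [hg]
    _ ≤ (∫⁻ a, g a ^ p ∂μ) ^ (1 / p) * (∫⁻ a, 1 ^ p.conjExponent ∂μ) ^ (1 / p.conjExponent) :=
      ENNReal.lintegral_mul_le_Lp_mul_Lq μ hpq hgm.aemeasurable aemeasurable_const
    _ ≤ (∫⁻ a, f a ^ p ∂μ) ^ (1 / p) * μ univ ^ (1 - 1 / p) := by
      rw [one_div p.conjExponent, ← hpq.one_sub_inv, ← one_div]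
      simp only [ENNReal.one_rpow, lintegral_one]
      gcongr with a
      exact hgf a

end MeasureTheory

theorem W1NormR_eq (p : ℝ≥0∞) (f : ℝ → ℂ) :
    W1NormR p f = eLpNorm f p volume + eLpNorm (deriv f) p volume := by
  rw [W1NormR, eLpNorm_congr_norm_ae (f := fderiv ℝ f) (g := deriv f)
    (.of_forall fun _ => norm_deriv_eq_norm_fderiv.symm)]

theorem W1NormR_conj (p : ℝ≥0∞) (f : ℝ → ℂ) :
    W1NormR p (fun x => starRingEnd ℂ (f x)) = W1NormR p f := by
  have hderiv : deriv (fun x => starRingEnd ℂ (f x)) = fun x => starRingEnd ℂ (deriv f x) :=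
    deriv.star'
  simp only [W1NormR_eq, hderiv]
  congr 1 <;> exact eLpNorm_congr_norm_ae (.of_forall fun x => Complex.norm_conj _)

theorem W1NormR_mul_le {p : ℝ≥0∞} (hp : 1 ≤ p) {f g : ℝ → ℂ} (hf : Differentiable ℝ f)
    (hg : Differentiable ℝ g) :
    W1NormR p (fun x => f x * g x) ≤ W1NormR ⊤ f * W1NormR p g := by
  have hderiv : deriv (fun x => f x * g x) = deriv f * g + f * deriv g :=
    funext fun x => deriv_mul (hf x) (hg x)
  have hg_meas : AEStronglyMeasurable g volume := hg.continuous.aestronglyMeasurable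
  have hg'_meas : AEStronglyMeasurable (deriv g) volume :=
    (measurable_deriv g).aestronglyMeasurable
  set a := eLpNorm f ⊤ volume
  set b := eLpNorm (deriv f) ⊤ volume
  set c := eLpNorm g p volume
  set d := eLpNorm (deriv g) p volume
  calc W1NormR p (fun x => f x * g x)
      = eLpNorm (f * g) p volume + eLpNorm (deriv f * g + f * deriv g) p volume := by
        rw [W1NormR_eq, hderiv]; rfl
    _ ≤ eLpNorm (f * g) p volume
        + (eLpNorm (deriv f * g) p volume + eLpNorm (f * deriv g) p volume) := by
        gcongr
        exact eLpNorm_add_le ((measurable_deriv f).aestronglyMeasurable.mul hg_meas)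
          (hf.continuous.aestronglyMeasurable.mul hg'_meas) hp
    _ ≤ a * c + (b * c + a * d) := by
        gcongr
        · exact eLpNorm_smul_le_eLpNorm_top_mul_eLpNorm p hg_meas f
        · exact eLpNorm_smul_le_eLpNorm_top_mul_eLpNorm p hg_meas (deriv f)
        · exact eLpNorm_smul_le_eLpNorm_top_mul_eLpNorm p hg'_meas f
    _ ≤ (a + b) * (c + d) := by
        calc a * c + (b * c + a * d) ≤ a * c + (b * c + a * d) + b * d := le_self_add
          _ = (a + b) * (c + d) := by ring
    _ = W1NormR ⊤ f * W1NormR p g := by rw [W1NormR_eq, W1NormR_eq]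

theorem ae_eq_zero_of_lintegral_W1NormR_top_rpow_eq_zero {μ : Measure ℝ} {z : ℝ → ℝ → ℂ}
    (hz : Measurable (uncurry z)) {p : ℝ} (hp : 0 < p) (hdiff : ∀ᵐ t ∂μ, Differentiable ℝ (z t))
    (h : ∫⁻ t, W1NormR ⊤ (z t) ^ p ∂μ = 0) : ∀ᵐ t ∂μ, z t = 0 := by
  have h' : ∫⁻ t, eLpNorm (z t) ⊤ volume ^ p ∂μ = 0 :=
    le_antisymm (h ▸ lintegral_mono fun t => by gcongr; exact le_self_add) zero_le
  filter_upwards [ae_ae_eq_zero_of_lintegral_eLpNorm_top_rpow_eq_zero hz hp h', hdiff]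
    with t ht hd
  exact (hd.continuous.ae_eq_iff_eq volume continuous_zero).1 ht

theorem bilinear_estimate_H1_d1_general (T : ℝ) (hT : 0 < T) (y z : ℝ → ℝ → ℂ)
    (hz : Measurable (Function.uncurry z))
    (hdiff : ∀ᵐ t ∂((volume : Measure ℝ).restrict (Set.Icc (0 : ℝ) T)),
      Differentiable ℝ (y t) ∧ Differentiable ℝ (z t)) :
    (∫⁻ t in Set.Icc (0 : ℝ) T,
        W1NormR 2 (fun ξ => z t ξ * (starRingEnd ℂ) (y t ξ)))
      ≤ 2 * ENNReal.ofReal T ^ ((3 : ℝ) / 4)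
          * (∫⁻ t in Set.Icc (0 : ℝ) T, W1NormR ⊤ (z t) ^ ((4 : ℝ))) ^ ((1 : ℝ) / 4)
          * essSup (fun t => W1NormR 2 (y t))
              ((volume : Measure ℝ).restrict (Set.Icc (0 : ℝ) T)) := by
  set μ := (volume : Measure ℝ).restrict (Icc 0 T)
  set E := essSup (fun t => W1NormR 2 (y t)) μ
  set I := ∫⁻ t, W1NormR ⊤ (z t) ^ (4 : ℝ) ∂μ
  have hbound : ∀ᵐ t ∂μ, W1NormR 2 (fun ξ => z t ξ * starRingEnd ℂ (y t ξ))
      ≤ W1NormR ⊤ (z t) * W1NormR 2 (y t) := by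
    filter_upwards [hdiff] with t ⟨hyt, hzt⟩
    rw [← W1NormR_conj 2 (y t)]
    exact W1NormR_mul_le one_le_two hzt hyt.star
  rcases eq_or_ne E ⊤ with hE | hE
  · rcases eq_or_ne I 0 with hI | hI
    · refine le_of_eq_of_le (lintegral_eq_zero_of_ae_eq_zero ?_) zero_le
      filter_upwards [ae_eq_zero_of_lintegral_W1NormR_top_rpow_eq_zero hz four_pos
        (hdiff.mono fun _ h => h.2) hI] with t ht
      simp [W1NormR_eq, ht]
    · have hc : 2 * ENNReal.ofReal T ^ ((3 : ℝ) / 4) * I ^ ((1 : ℝ) / 4) ≠ 0 := by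
        simp [ENNReal.rpow_eq_zero_iff, hT, hI]
      rw [hE, ENNReal.mul_top hc]
      exact le_top
  · calc ∫⁻ t, W1NormR 2 (fun ξ => z t ξ * starRingEnd ℂ (y t ξ)) ∂μ
        ≤ ∫⁻ t, W1NormR ⊤ (z t) * W1NormR 2 (y t) ∂μ := lintegral_mono_ae hbound
      _ ≤ (∫⁻ t, W1NormR ⊤ (z t) ∂μ) * E := lintegral_mul_le_lintegral_mul_essSup _ _ hE
      _ ≤ I ^ ((1 : ℝ) / 4) * μ univ ^ (1 - (1 : ℝ) / 4) * E := by
        gcongr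
        exact lintegral_le_lintegral_rpow_mul_measure_univ μ (by norm_num) _
      _ ≤ 2 * ENNReal.ofReal T ^ ((3 : ℝ) / 4) * I ^ ((1 : ℝ) / 4) * E := by
        rw [Measure.restrict_apply_univ, Real.volume_Icc, sub_zero, mul_comm (I ^ _),
          show (1 : ℝ) - 1 / 4 = 3 / 4 by norm_num]
        gcongr ?_ * _ * _
        exact le_mul_of_one_le_left' one_le_two

/-- `H¹`-level bilinear estimate for the quadratic nonlinearity in dimension `d = 1`:
`∫₀ᵀ ‖z(t) conj(y(t))‖_{W^{1,2}} dt ≤ 2 T^{3/4} (∫₀ᵀ ‖z(t)‖_{W^{1,∞}}⁴ dt)^{1/4}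
  · ess sup_{t∈[0,T]} ‖y(t)‖_{W^{1,2}}`. -/
theorem bilinear_estimate_H1_d1 (T : ℝ) (hT : 0 < T) (y z : ℝ → ℝ → ℂ)
    (hy : Measurable (Function.uncurry y)) (hz : Measurable (Function.uncurry z))
    (hdiff : ∀ᵐ t ∂((volume : Measure ℝ).restrict (Set.Icc (0 : ℝ) T)),
      Differentiable ℝ (y t) ∧ Differentiable ℝ (z t)) :
    (∫⁻ t in Set.Icc (0 : ℝ) T,
        W1NormR 2 (fun ξ => z t ξ * (starRingEnd ℂ) (y t ξ)))
      ≤ 2 * ENNReal.ofReal T ^ ((3 : ℝ) / 4)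
          * (∫⁻ t in Set.Icc (0 : ℝ) T, W1NormR ⊤ (z t) ^ ((4 : ℝ))) ^ ((1 : ℝ) / 4)
          * essSup (fun t => W1NormR 2 (y t))
              ((volume : Measure ℝ).restrict (Set.Icc (0 : ℝ) T)) :=
  bilinear_estimate_H1_d1_general T hT y z hz hdiff
end
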